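/- Define p_n := ∫_{[−1,1]} |x|^{n−1}(1−|x|) υ(dx) for integers n ≥ 1 (the distribution of the first regeneration time τ₁ of the chain, so ∑_{n≥1} p_n = 1), H(u) := ∑_{1 ≤ n ≤ u} n²·p_n for u > 0, and V(x) := (2/θ)·∫_{[0,1−x]} (1−y)^{−2} υ(dy) for x ∈ (0,1). Assume V is slowly varying at 0⁺, i.e. V(sx)/V(x) → 1 as x → 0⁺ for every s > 0, and V(x) → ∞ as x → 0⁺. Then H(1/x)/(2θ·V(x)) → 1 as x → 0⁺. In particular u ↦ H(u) is slowly varying at infinity. -/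

import Mathlib

/-!
Push `υ` forward along `y ↦ 1 - |y|` to a measure `ν` on `(0, 1]`. Then `H (1/x) = ∫ f_N dν`
with `N = ⌊1/x⌋` and `f_N s = s ∑_{n ≤ N} n² (1 - s)^(n-1)`, whose closed form
`s² f_N s = 2 - s - (1 - s)ᴺ ((Ns)² + 2Ns - s + 2)` shows that `f_N s ≈ 2 / s²` once `Ns` is
large, while `f_N s ≤ N³ s` always. By symmetry of `υ`, `J x = ∫_{s ≥ x} s⁻² dν` equals
`θ V x - υ {0}`, so `J` is slowly varying and tends to `∞`. Hence the part `s ≥ K x` of the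
integral is `≈ 2 J (K x) ≈ 2 J x`, and the part `s < x` is at most `N³ ∫_{s < x} s dν`, which is
`o(x³ J x)` by a Karamata-type estimate over dyadic shells. Slow variation of `H` at infinity is
then inherited from that of `V`.
-/

open MeasureTheory Filter Topology Set Asymptotics

/-- `H u = ∫ secondMomentKernel ⌊u⌋₊ s dν(s)` when `ν` is the law of `1 - |y|` under `υ`. -/
noncomputable def secondMomentKernel (N : ℕ) (s : ℝ) : ℝ :=
  ∑ n ∈ Finset.Icc 1 N, (n : ℝ) ^ 2 * ((1 - s) ^ (n - 1) * s)

theorem sq_mul_secondMomentKernel (N : ℕ) (s : ℝ) :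
    s ^ 2 * secondMomentKernel N s
      = 2 - s - (1 - s) ^ N * ((N * s) ^ 2 + 2 * N * s - s + 2) := by
  induction N with
  | zero => simp [secondMomentKernel]; ring
  | succ N ih =>
    rw [secondMomentKernel, Finset.sum_Icc_succ_top (by omega), mul_add, ← secondMomentKernel, ih,
      Nat.add_sub_cancel]
    push_cast
    ring

section kernelBounds

variable {s : ℝ}

theorem secondMomentKernel_nonneg (hs0 : 0 ≤ s) (hs1 : s ≤ 1) (N : ℕ) :
    0 ≤ secondMomentKernel N s :=
  Finset.sum_nonneg fun _ _ => by
    have : 0 ≤ 1 - s := by linarith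
    positivity

theorem secondMomentKernel_le_two_div_sq (hs0 : 0 < s) (hs1 : s ≤ 1) (N : ℕ) :
    secondMomentKernel N s ≤ 2 / s ^ 2 := by
  rw [le_div_iff₀' (by positivity), sq_mul_secondMomentKernel]
  have : 0 ≤ (1 - s) ^ N * ((N * s) ^ 2 + 2 * N * s - s + 2) := by
    have : 0 ≤ 1 - s := by linarith
    have : 0 ≤ (N : ℝ) * s := by positivity
    have : 0 ≤ (N * s) ^ 2 + 2 * N * s - s + 2 := by nlinarith
    positivity
  linarith

theorem secondMomentKernel_le_cube_mul (hs0 : 0 ≤ s) (hs1 : s ≤ 1) (N : ℕ) :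
    secondMomentKernel N s ≤ (N : ℝ) ^ 3 * s := by
  have hterm : ∀ n ∈ Finset.Icc 1 N,
      (n : ℝ) ^ 2 * ((1 - s) ^ (n - 1) * s) ≤ (N : ℝ) ^ 2 * s := by
    intro n hn
    have hnN : (n : ℝ) ≤ N := by exact_mod_cast (Finset.mem_Icc.1 hn).2
    have hpow : (1 - s) ^ (n - 1) ≤ 1 := pow_le_one₀ (by linarith) (by linarith)
    have : (1 - s) ^ (n - 1) * s ≤ s := by
      nlinarith [pow_nonneg (by linarith : 0 ≤ 1 - s) (n - 1)]
    exact mul_le_mul (by gcongr) this (mul_nonneg (pow_nonneg (by linarith) _) hs0)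
      (by positivity)
  calc secondMomentKernel N s ≤ ∑ _n ∈ Finset.Icc 1 N, (N : ℝ) ^ 2 * s :=
        Finset.sum_le_sum hterm
    _ = (N : ℝ) ^ 3 * s := by simp; ring

/-- `24 eᵘ ≥ u⁴ + 4u³ + 12u² + 24u + 24 ≥ u² (u² + 2u + 2)` and `(1 - s)ᴺ ≤ e^{-Ns}`. -/
theorem one_sub_pow_mul_poly_le (hs0 : 0 ≤ s) (hs1 : s ≤ 1) (N : ℕ) :
    (1 - s) ^ N * ((N * s) ^ 2 * ((N * s) ^ 2 + 2 * (N * s) + 2)) ≤ 24 := by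
  set u : ℝ := N * s
  have hu : 0 ≤ u := by positivity
  have hexp : u ^ 4 + 4 * u ^ 3 + 12 * u ^ 2 + 24 * u + 24 ≤ 24 * Real.exp u := by
    have := Real.sum_le_exp_of_nonneg hu 5
    simp [Finset.sum_range_succ, Nat.factorial] at this
    linarith
  have hpow : (1 - s) ^ N ≤ Real.exp (-u) := by
    calc (1 - s) ^ N ≤ Real.exp (-s) ^ N :=
          pow_le_pow_left₀ (by linarith) (Real.one_sub_le_exp_neg s) N
      _ = Real.exp (-u) := by rw [← Real.exp_nat_mul, mul_neg]
  have hpoly : 0 ≤ u ^ 2 * (u ^ 2 + 2 * u + 2) := by positivity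
  calc (1 - s) ^ N * (u ^ 2 * (u ^ 2 + 2 * u + 2))
      ≤ Real.exp (-u) * (24 * Real.exp u) :=
        mul_le_mul hpow (by nlinarith) hpoly (Real.exp_pos _).le
    _ = 24 := by rw [mul_left_comm, ← Real.exp_add]; simp

theorem inv_sq_sub_inv_le_secondMomentKernel {a : ℝ} (ha : 0 < a) (has : a ≤ s) (hs1 : s ≤ 1)
    {N : ℕ} (hN : N ≠ 0) :
    (2 - 24 / (N * a) ^ 2) * (s ^ 2)⁻¹ - s⁻¹ ≤ secondMomentKernel N s := by
  have hs0 : 0 < s := ha.trans_le has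
  have hNa : 0 < (N : ℝ) * a := by positivity
  have hNs : (N : ℝ) * a ≤ N * s := by gcongr
  have hrem : (1 - s) ^ N * ((N * s) ^ 2 + 2 * N * s - s + 2) ≤ 24 / (N * a) ^ 2 := by
    rw [le_div_iff₀ (by positivity)]
    have h := one_sub_pow_mul_poly_le hs0.le hs1 N
    have h1 : 0 ≤ (1 - s) ^ N := pow_nonneg (by linarith) N
    have h2 : ((N : ℝ) * a) ^ 2 ≤ (N * s) ^ 2 := by gcongr
    have h4 : (N * s) ^ 2 + 2 * N * s - s + 2 ≤ (N * s) ^ 2 + 2 * (N * s) + 2 := by linarith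
    calc (1 - s) ^ N * ((N * s) ^ 2 + 2 * N * s - s + 2) * (N * a) ^ 2
        ≤ (1 - s) ^ N * ((N * s) ^ 2 + 2 * (N * s) + 2) * (N * s) ^ 2 :=
          mul_le_mul (mul_le_mul_of_nonneg_left h4 h1) h2 (sq_nonneg _)
            (mul_nonneg h1 (by positivity))
      _ ≤ 24 := by linarith
  have key := sq_mul_secondMomentKernel N s
  rw [show (2 - 24 / (N * a) ^ 2) * (s ^ 2)⁻¹ - s⁻¹ = (2 - s - 24 / (N * a) ^ 2) / s ^ 2 by
    field_simp; ring, div_le_iff₀' (by positivity)]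
  linarith

end kernelBounds

noncomputable def invSqTail (ν : Measure ℝ) (x : ℝ) : ℝ := ∫ s in Ici x, (s ^ 2)⁻¹ ∂ν

theorem invSqTail_nonneg (ν : Measure ℝ) (x : ℝ) : 0 ≤ invSqTail ν x :=
  setIntegral_nonneg measurableSet_Ici fun _ _ => by positivity

section finiteMeasure

variable {ν : Measure ℝ} [IsFiniteMeasure ν]

theorem integrableOn_inv_sq_Ici {a : ℝ} (ha : 0 < a) :
    IntegrableOn (fun s : ℝ => (s ^ 2)⁻¹) (Ici a) ν := by
  refine Integrable.of_bound (by fun_prop) (a ^ 2)⁻¹ ?_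
  filter_upwards [ae_restrict_mem measurableSet_Ici] with s hs
  rw [Real.norm_of_nonneg (by positivity)]
  exact inv_anti₀ (by positivity) (pow_le_pow_left₀ ha.le hs 2)

theorem invSqTail_eq_add {a b : ℝ} (ha : 0 < a) (hab : a ≤ b) :
    invSqTail ν a = (∫ s in Ico a b, (s ^ 2)⁻¹ ∂ν) + invSqTail ν b := by
  have hi := integrableOn_inv_sq_Ici (ν := ν) ha
  rw [invSqTail, invSqTail, ← Ico_union_Ici_eq_Ici hab,
    setIntegral_union ((Iio_disjoint_Ici le_rfl).mono_left Ico_subset_Iio_self) measurableSet_Ici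
      (hi.mono_set Ico_subset_Ici_self) (hi.mono_set (Ici_subset_Ici.2 hab))]

theorem integrableOn_id_Iio (hν : ∀ᵐ s ∂ν, 0 < s) (y : ℝ) :
    IntegrableOn (fun s : ℝ => s) (Iio y) ν := by
  refine Integrable.of_bound (by fun_prop) y ?_
  filter_upwards [ae_restrict_mem measurableSet_Iio, ae_restrict_of_ae hν] with s hs hs0
  rw [Real.norm_of_nonneg hs0.le]
  exact hs.le

theorem setIntegral_Iio_le_mul_measureReal_univ (hν : ∀ᵐ s ∂ν, 0 < s) {y : ℝ} (hy : 0 ≤ y) :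
    ∫ s in Iio y, s ∂ν ≤ y * ν.real univ := by
  calc ∫ s in Iio y, s ∂ν ≤ ∫ _ in Iio y, y ∂ν :=
        setIntegral_mono_on (integrableOn_id_Iio hν y) (integrableOn_const (by simp))
          measurableSet_Iio fun s hs => hs.le
    _ = y * ν.real (Iio y) := by rw [setIntegral_const, smul_eq_mul, mul_comm]
    _ ≤ y * ν.real univ := mul_le_mul_of_nonneg_left (measureReal_mono (subset_univ _)) hy

theorem setIntegral_Iio_le_add_setIntegral_Iio_half (hν : ∀ᵐ s ∂ν, 0 < s) {ε y : ℝ} (hy : 0 < y)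
    (hhalf : invSqTail ν (y / 2) ≤ (1 + ε) * invSqTail ν y) :
    ∫ s in Iio y, s ∂ν ≤ ε * y ^ 3 * invSqTail ν y + ∫ s in Iio (y / 2), s ∂ν := by
  have hy2 : y / 2 ≤ y := by linarith
  have hint := integrableOn_id_Iio hν y
  have hshell : ∫ s in Ico (y / 2) y, s ∂ν ≤ y ^ 3 * ∫ s in Ico (y / 2) y, (s ^ 2)⁻¹ ∂ν := by
    rw [← integral_const_mul]
    refine setIntegral_mono_on (hint.mono_set Ico_subset_Iio_self)
      (((integrableOn_inv_sq_Ici (by positivity)).mono_set Ico_subset_Ici_self).const_mul _)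
      measurableSet_Ico fun s hs => ?_
    have hs0 : 0 < s := by linarith [hs.1]
    rw [← div_eq_mul_inv, le_div_iff₀ (by positivity)]
    nlinarith [pow_le_pow_left₀ hs0.le hs.2.le 3]
  have hJ := invSqTail_eq_add (ν := ν) (by positivity) hy2
  rw [← Iio_union_Ico_eq_Iio hy2, setIntegral_union
    ((Iio_disjoint_Ici le_rfl).mono_right Ico_subset_Ici_self) measurableSet_Ico
    (integrableOn_id_Iio hν _) (hint.mono_set Ico_subset_Iio_self)]
  nlinarith [pow_pos hy 3]

/-- Peeling off the shell `[y/2, y)` costs at most `ε y³ J y`; the remainder `x ν(ℝ) / 2 ^ m`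
bounds what is left below `x / 2 ^ m`. -/
theorem setIntegral_Iio_le_of_invSqTail_half_le (hν : ∀ᵐ s ∂ν, 0 < s) {ε x : ℝ} (hε0 : 0 ≤ ε)
    (hε1 : ε ≤ 1) (hx : 0 < x)
    (hhalf : ∀ y ∈ Ioc 0 x, invSqTail ν (y / 2) ≤ (1 + ε) * invSqTail ν y) :
    ∫ s in Iio x, s ∂ν ≤ 2 * ε * x ^ 3 * invSqTail ν x := by
  have hbound : ∀ m : ℕ, ∀ y ∈ Ioc 0 x,
      ∫ s in Iio y, s ∂ν ≤ 2 * ε * y ^ 3 * invSqTail ν y + y * ν.real univ / 2 ^ m := by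
    intro m
    induction m with
    | zero =>
      rintro y ⟨hy0, -⟩
      have := invSqTail_nonneg ν y
      have : 0 ≤ 2 * ε * y ^ 3 * invSqTail ν y := by positivity
      have := setIntegral_Iio_le_mul_measureReal_univ hν hy0.le
      rw [pow_zero, div_one]
      linarith
    | succ m ih =>
      rintro y ⟨hy0, hyx⟩
      have hstep := setIntegral_Iio_le_add_setIntegral_Iio_half hν hy0 (hhalf y ⟨hy0, hyx⟩)
      have hrest := ih (y / 2) ⟨by positivity, by linarith⟩
      have hhalf_le : 2 * ε * (y / 2) ^ 3 * invSqTail ν (y / 2) ≤ ε * y ^ 3 * invSqTail ν y := by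
        have hP : 0 ≤ ε * y ^ 3 * invSqTail ν y := by
          have := invSqTail_nonneg ν y
          positivity
        calc 2 * ε * (y / 2) ^ 3 * invSqTail ν (y / 2)
            ≤ 2 * ε * (y / 2) ^ 3 * ((1 + ε) * invSqTail ν y) := by
              gcongr
              exact hhalf y ⟨hy0, hyx⟩
          _ = (1 + ε) / 4 * (ε * y ^ 3 * invSqTail ν y) := by ring
          _ ≤ 1 * (ε * y ^ 3 * invSqTail ν y) := by gcongr; linarith
          _ = ε * y ^ 3 * invSqTail ν y := one_mul _
      have hmass : y / 2 * ν.real univ / 2 ^ m = y * ν.real univ / 2 ^ (m + 1) := by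
        rw [pow_succ]; ring
      linarith
  have hlim : Tendsto (fun m : ℕ => 2 * ε * x ^ 3 * invSqTail ν x + x * ν.real univ / 2 ^ m)
      atTop (𝓝 (2 * ε * x ^ 3 * invSqTail ν x)) := by
    simpa using tendsto_const_nhds.add (tendsto_const_nhds.div_atTop
      (tendsto_pow_atTop_atTop_of_one_lt (one_lt_two (α := ℝ))))
  exact ge_of_tendsto' hlim fun m => hbound m x ⟨hx, le_rfl⟩

variable (hν : ∀ᵐ s ∂ν, s ∈ Ioc 0 1)
include hν

theorem integrable_secondMomentKernel (N : ℕ) : Integrable (secondMomentKernel N) ν := by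
  refine Integrable.of_bound (by unfold secondMomentKernel; fun_prop) ((N : ℝ) ^ 3) ?_
  filter_upwards [hν] with s hs
  rw [Real.norm_of_nonneg (secondMomentKernel_nonneg hs.1.le hs.2 N)]
  nlinarith [secondMomentKernel_le_cube_mul hs.1.le hs.2 N, hs.2,
    pow_nonneg (Nat.cast_nonneg (α := ℝ) N) 3]

theorem integral_secondMomentKernel (N : ℕ) :
    ∫ s, secondMomentKernel N s ∂ν
      = ∑ n ∈ Finset.Icc 1 N, (n : ℝ) ^ 2 * ∫ s, (1 - s) ^ (n - 1) * s ∂ν := by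
  have hterm : ∀ n : ℕ, Integrable (fun s : ℝ => (n : ℝ) ^ 2 * ((1 - s) ^ (n - 1) * s)) ν := by
    intro n
    refine Integrable.of_bound (by fun_prop) ((n : ℝ) ^ 2) ?_
    filter_upwards [hν] with s hs
    have h1 : 0 ≤ 1 - s := by linarith [hs.2]
    have h2 : (1 - s) ^ (n - 1) ≤ 1 := pow_le_one₀ h1 (by linarith [hs.1])
    rw [Real.norm_of_nonneg (by have := hs.1; positivity)]
    nlinarith [mul_le_mul h2 hs.2 hs.1.le zero_le_one, pow_nonneg h1 (n - 1), hs.1,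
      sq_nonneg (n : ℝ)]
  simp_rw [secondMomentKernel]
  rw [integral_finsetSum _ fun n _ => hterm n]
  simp_rw [integral_const_mul]

theorem integral_secondMomentKernel_le {ε x : ℝ} (hε0 : 0 ≤ ε) (hε1 : ε ≤ 1) (hx : 0 < x)
    (hhalf : ∀ y ∈ Ioc 0 x, invSqTail ν (y / 2) ≤ (1 + ε) * invSqTail ν y) {N : ℕ}
    (hNx : N * x ≤ 1) :
    ∫ s, secondMomentKernel N s ∂ν ≤ (2 + 2 * ε) * invSqTail ν x := by
  have hint := integrable_secondMomentKernel hν N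
  have hnear : ∫ s in Ici x, secondMomentKernel N s ∂ν ≤ 2 * invSqTail ν x := by
    rw [invSqTail, ← integral_const_mul]
    refine setIntegral_mono_ae_restrict hint.integrableOn
      ((integrableOn_inv_sq_Ici hx).const_mul 2) ?_
    filter_upwards [ae_restrict_of_ae hν] with s hs
    simpa [div_eq_mul_inv] using secondMomentKernel_le_two_div_sq hs.1 hs.2 N
  have hcube : Integrable (fun s : ℝ => (N : ℝ) ^ 3 * s) ν := by
    refine Integrable.of_bound (by fun_prop) ((N : ℝ) ^ 3) ?_
    filter_upwards [hν] with s hs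
    rw [Real.norm_of_nonneg (by have := hs.1; positivity)]
    nlinarith [hs.2, pow_nonneg (Nat.cast_nonneg (α := ℝ) N) 3]
  have hfar : ∫ s in Iio x, secondMomentKernel N s ∂ν ≤ 2 * ε * invSqTail ν x := by
    have hJ := invSqTail_nonneg ν x
    calc ∫ s in Iio x, secondMomentKernel N s ∂ν ≤ ∫ s in Iio x, (N : ℝ) ^ 3 * s ∂ν := by
          refine setIntegral_mono_ae_restrict hint.integrableOn hcube.integrableOn ?_
          filter_upwards [ae_restrict_of_ae hν] with s hs
          exact secondMomentKernel_le_cube_mul hs.1.le hs.2 N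
      _ = (N : ℝ) ^ 3 * ∫ s in Iio x, s ∂ν := integral_const_mul _ _
      _ ≤ (N : ℝ) ^ 3 * (2 * ε * x ^ 3 * invSqTail ν x) := by
          gcongr
          exact setIntegral_Iio_le_of_invSqTail_half_le (hν.mono fun s hs => hs.1) hε0 hε1 hx
            hhalf
      _ = (N * x) ^ 3 * (2 * ε * invSqTail ν x) := by ring
      _ ≤ 1 * (2 * ε * invSqTail ν x) := by
          gcongr
          exact pow_le_one₀ (by positivity) hNx
      _ = 2 * ε * invSqTail ν x := one_mul _
  rw [← integral_add_compl measurableSet_Ici hint, compl_Ici]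
  linarith

theorem le_integral_secondMomentKernel (hinv : Integrable (fun s : ℝ => s⁻¹) ν) {a : ℝ}
    (ha : 0 < a) {N : ℕ} (hN : N ≠ 0) :
    (2 - 24 / (N * a) ^ 2) * invSqTail ν a - ∫ s, s⁻¹ ∂ν ≤ ∫ s, secondMomentKernel N s ∂ν := by
  have hJ := (integrableOn_inv_sq_Ici (ν := ν) ha).const_mul (2 - 24 / (N * a) ^ 2)
  calc (2 - 24 / (N * a) ^ 2) * invSqTail ν a - ∫ s, s⁻¹ ∂ν
      ≤ (2 - 24 / (N * a) ^ 2) * invSqTail ν a - ∫ s in Ici a, s⁻¹ ∂ν :=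
        sub_le_sub_left
          (setIntegral_le_integral hinv (hν.mono fun s hs => inv_nonneg.2 hs.1.le)) _
    _ = ∫ s in Ici a, ((2 - 24 / (N * a) ^ 2) * (s ^ 2)⁻¹ - s⁻¹) ∂ν := by
        rw [integral_sub hJ hinv.integrableOn, integral_const_mul, invSqTail]
    _ ≤ ∫ s in Ici a, secondMomentKernel N s ∂ν := by
        refine setIntegral_mono_ae_restrict (hJ.sub hinv.integrableOn)
          (integrable_secondMomentKernel hν N).integrableOn ?_
        filter_upwards [ae_restrict_mem measurableSet_Ici, ae_restrict_of_ae hν] with s has hs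
        exact inv_sq_sub_inv_le_secondMomentKernel ha has hs.2 hN
    _ ≤ ∫ s, secondMomentKernel N s ∂ν :=
        setIntegral_le_integral (integrable_secondMomentKernel hν N)
          (hν.mono fun s hs => secondMomentKernel_nonneg hs.1.le hs.2 N)

end finiteMeasure

theorem floor_one_div_mul_mem_Icc {x : ℝ} (hx0 : 0 < x) (hx1 : x ≤ 1) :
    (⌊1 / x⌋₊ : ℝ) * x ∈ Icc (1 / 2) 1 := by
  have hone : 1 ≤ 1 / x := by rw [le_div_iff₀ hx0]; linarith
  have hfloor : (1 : ℝ) ≤ ⌊1 / x⌋₊ := by exact_mod_cast Nat.one_le_floor_iff _ |>.2 hone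
  have hlt := Nat.lt_floor_add_one (1 / x)
  have hle := Nat.floor_le (zero_le_one.trans hone)
  constructor
  · rw [div_lt_iff₀ hx0] at hlt
    nlinarith
  · rwa [le_div_iff₀ hx0] at hle

theorem eventually_forall_Ioc_of_eventually_nhdsGT {P : ℝ → Prop}
    (h : ∀ᶠ y in 𝓝[>] (0 : ℝ), P y) : ∀ᶠ x in 𝓝[>] (0 : ℝ), ∀ y ∈ Ioc 0 x, P y := by
  obtain ⟨δ, hδ, hsub⟩ := mem_nhdsGT_iff_exists_Ioo_subset.1 h
  filter_upwards [Ioo_mem_nhdsGT hδ] with x hx y hy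
  exact hsub ⟨hy.1, hy.2.trans_lt hx.2⟩

theorem tendsto_const_mul_nhdsGT_zero {K : ℝ} (hK : 0 < K) :
    Tendsto (K * ·) (𝓝[>] (0 : ℝ)) (𝓝[>] 0) :=
  tendsto_nhdsWithin_iff.2 ⟨tendsto_nhdsWithin_of_tendsto_nhds
    ((continuous_const_mul K).tendsto' 0 0 (mul_zero K)),
    eventually_nhdsWithin_of_forall fun _ hx => mul_pos hK hx⟩

theorem tendsto_comp_mul_div_of_isEquivalent {f g : ℝ → ℝ} {l : Filter ℝ} {s : ℝ}
    (hfg : f ~[l] g) (hs : Tendsto (s * ·) l l) (hg : Tendsto (fun x => g (s * x) / g x) l (𝓝 1))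
    (hf0 : ∀ᶠ x in l, f x ≠ 0) : Tendsto (fun x => f (s * x) / f x) l (𝓝 1) :=
  (isEquivalent_iff_tendsto_one hf0).1
    (((hfg.comp_tendsto hs).trans (isEquivalent_of_tendsto_one hg)).trans hfg.symm)

theorem isEquivalent_of_eventuallyEq_sub_const {f g : ℝ → ℝ} {l : Filter ℝ} {c : ℝ}
    (hg : Tendsto g l atTop) (hfg : f =ᶠ[l] fun x => g x - c) : f ~[l] g :=
  (IsEquivalent.refl.add_const_of_norm_tendsto_atTop (c := -c)
    (tendsto_norm_atTop_atTop.comp hg)).congr_left (hfg.mono fun _ h => h.symm)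

theorem tendsto_mul_div_atTop_of_isEquivalent {H L : ℝ → ℝ}
    (hHL : (fun x => H (1 / x)) ~[𝓝[>] 0] L)
    (hLslow : ∀ s > 0, Tendsto (fun x => L (s * x) / L x) (𝓝[>] 0) (𝓝 1))
    (hLpos : ∀ᶠ x in 𝓝[>] 0, 0 < L x) {s : ℝ} (hs : 0 < s) :
    Tendsto (fun u => H (s * u) / H u) atTop (𝓝 1) := by
  have hinv : Tendsto (fun u : ℝ => 1 / u) atTop (𝓝[>] 0) := by
    simpa only [one_div] using tendsto_inv_atTop_nhdsGT_zero
  have hHL' : H ~[atTop] fun u => L (1 / u) := by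
    simpa only [Function.comp_def, one_div_one_div] using hHL.comp_tendsto hinv
  refine tendsto_comp_mul_div_of_isEquivalent hHL' (tendsto_id.const_mul_atTop hs) ?_
    ((hHL'.eventually_pos (hinv.eventually hLpos)).mono fun _ h => h.ne')
  refine ((hLslow s⁻¹ (inv_pos.2 hs)).comp hinv).congr fun u => ?_
  rw [Function.comp_apply, ← one_div_mul_one_div, one_div s]

section asymptotics

variable {ν : Measure ℝ} [IsFiniteMeasure ν] (hν : ∀ᵐ s ∂ν, s ∈ Ioc 0 1)
  (hslow : ∀ K > 0, Tendsto (fun x => invSqTail ν (K * x) / invSqTail ν x) (𝓝[>] 0) (𝓝 1))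
  (hinf : Tendsto (invSqTail ν) (𝓝[>] 0) atTop)
include hν hslow hinf

theorem eventually_lt_integral_secondMomentKernel_div (hinv : Integrable (fun s : ℝ => s⁻¹) ν)
    {b : ℝ} (hb : b < 2) :
    ∀ᶠ x in 𝓝[>] 0, b < (∫ s, secondMomentKernel ⌊1 / x⌋₊ s ∂ν) / invSqTail ν x := by
  obtain ⟨K, hKb, hK⟩ : ∃ K : ℝ, b < 2 - 96 / K ^ 2 ∧ 0 < K := by
    have : Tendsto (fun K : ℝ => 2 - 96 / K ^ 2) atTop (𝓝 2) := by
      simpa using tendsto_const_nhds.sub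
        (tendsto_const_nhds.div_atTop (tendsto_pow_atTop (α := ℝ) two_ne_zero))
    exact ((this.eventually (lt_mem_nhds hb)).and (eventually_gt_atTop 0)).exists
  have hlim : Tendsto (fun x => (2 - 96 / K ^ 2) * (invSqTail ν (K * x) / invSqTail ν x)
      - (∫ s, s⁻¹ ∂ν) * (invSqTail ν x)⁻¹) (𝓝[>] 0) (𝓝 (2 - 96 / K ^ 2)) := by
    simpa using ((hslow K hK).const_mul _).sub
      ((tendsto_inv_atTop_zero.comp hinf).const_mul (∫ s, s⁻¹ ∂ν))
  filter_upwards [hlim.eventually (lt_mem_nhds hKb), hinf.eventually_gt_atTop 0,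
    Ioo_mem_nhdsGT one_pos] with x hbx hJx hx
  obtain ⟨hNx, -⟩ := floor_one_div_mul_mem_Icc hx.1 hx.2.le
  have hN : ⌊1 / x⌋₊ ≠ 0 := by
    rintro h
    rw [h] at hNx
    norm_num at hNx
  -- `N x ≥ 1/2` turns the error term `24 / (N K x)²` of the kernel into `96 / K²`
  have hcoef : 2 - 96 / K ^ 2 ≤ 2 - 24 / (⌊1 / x⌋₊ * (K * x)) ^ 2 := by
    rw [show (⌊1 / x⌋₊ : ℝ) * (K * x) = (⌊1 / x⌋₊ * x) * K by ring, mul_pow,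
      div_mul_eq_div_div]
    gcongr
    rw [div_le_iff₀ (by nlinarith)]
    nlinarith
  refine hbx.trans_le ?_
  rw [le_div_iff₀ hJx]
  calc ((2 - 96 / K ^ 2) * (invSqTail ν (K * x) / invSqTail ν x)
        - (∫ s, s⁻¹ ∂ν) * (invSqTail ν x)⁻¹) * invSqTail ν x
      = (2 - 96 / K ^ 2) * invSqTail ν (K * x) - ∫ s, s⁻¹ ∂ν := by field_simp
    _ ≤ (2 - 24 / (⌊1 / x⌋₊ * (K * x)) ^ 2) * invSqTail ν (K * x) - ∫ s, s⁻¹ ∂ν := by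
      gcongr
      exact invSqTail_nonneg ν _
    _ ≤ ∫ s, secondMomentKernel ⌊1 / x⌋₊ s ∂ν :=
      le_integral_secondMomentKernel hν hinv (mul_pos hK hx.1) hN

theorem eventually_integral_secondMomentKernel_div_lt {b : ℝ} (hb : 2 < b) :
    ∀ᶠ x in 𝓝[>] 0, (∫ s, secondMomentKernel ⌊1 / x⌋₊ s ∂ν) / invSqTail ν x < b := by
  set ε := min 1 ((b - 2) / 4)
  have hε0 : 0 < ε := lt_min one_pos (by linarith)
  have hεb : 2 + 2 * ε < b := by linarith [min_le_right 1 ((b - 2) / 4)]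
  have hJpos : ∀ᶠ x in 𝓝[>] (0 : ℝ), 0 < invSqTail ν x := hinf.eventually_gt_atTop 0
  have hhalf : ∀ᶠ y in 𝓝[>] (0 : ℝ), invSqTail ν (y / 2) ≤ (1 + ε) * invSqTail ν y := by
    filter_upwards [(hslow (1 / 2) one_half_pos).eventually
      (gt_mem_nhds (lt_add_of_pos_right 1 hε0)), hJpos] with y hy hJy
    rw [← div_le_iff₀ hJy, show y / 2 = 1 / 2 * y by ring]
    exact hy.le
  filter_upwards [eventually_forall_Ioc_of_eventually_nhdsGT hhalf, hJpos,
    Ioo_mem_nhdsGT one_pos] with x hhalfx hJx hx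
  obtain ⟨-, hNx⟩ := floor_one_div_mul_mem_Icc hx.1 hx.2.le
  rw [div_lt_iff₀ hJx]
  calc ∫ s, secondMomentKernel ⌊1 / x⌋₊ s ∂ν ≤ (2 + 2 * ε) * invSqTail ν x :=
        integral_secondMomentKernel_le hν hε0.le (min_le_left _ _) hx.1 hhalfx hNx
    _ < b * invSqTail ν x := by gcongr

theorem tendsto_integral_secondMomentKernel_div_invSqTail
    (hinv : Integrable (fun s : ℝ => s⁻¹) ν) :
    Tendsto (fun x => (∫ s, secondMomentKernel ⌊1 / x⌋₊ s ∂ν) / invSqTail ν x) (𝓝[>] 0)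
      (𝓝 2) :=
  tendsto_order.2 ⟨fun _ hb => eventually_lt_integral_secondMomentKernel_div hν hslow hinf hinv hb,
    fun _ hb => eventually_integral_secondMomentKernel_div_lt hν hslow hinf hb⟩

end asymptotics

theorem isEquivalent_integral_secondMomentKernel {ν : Measure ℝ} [IsFiniteMeasure ν]
    (hν : ∀ᵐ s ∂ν, s ∈ Ioc 0 1) (hinv : Integrable (fun s : ℝ => s⁻¹) ν) {L : ℝ → ℝ}
    (hJL : invSqTail ν ~[𝓝[>] 0] L)
    (hLslow : ∀ K > 0, Tendsto (fun x => L (K * x) / L x) (𝓝[>] 0) (𝓝 1))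
    (hLinf : Tendsto L (𝓝[>] 0) atTop) :
    (fun x => ∫ s, secondMomentKernel ⌊1 / x⌋₊ s ∂ν) ~[𝓝[>] 0] fun x => 2 * L x := by
  have hJinf := hJL.symm.tendsto_atTop hLinf
  have hJslow (K : ℝ) (hK : 0 < K) :=
    tendsto_comp_mul_div_of_isEquivalent hJL (tendsto_const_mul_nhdsGT_zero hK) (hLslow K hK)
      (hJinf.eventually_ne_atTop 0)
  have := (tendsto_integral_secondMomentKernel_div_invSqTail hν hJslow hJinf hinv).div_const 2
  rw [div_self two_ne_zero] at this
  refine (isEquivalent_of_tendsto_one (this.congr fun x => ?_)).trans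
    ((IsEquivalent.refl (u := fun _ => (2 : ℝ))).mul hJL)
  simp only [Pi.div_apply, Pi.mul_apply]
  ring

theorem setIntegral_Icc_neg_eq_of_even {μ : Measure ℝ} [μ.IsNegInvariant] {f : ℝ → ℝ}
    (hf : ∀ y, f (-y) = f y) {a : ℝ} (ha : 0 ≤ a) (hfi : IntegrableOn f (Icc (-a) a) μ) :
    ∫ y in Icc (-a) a, f y ∂μ = 2 * ∫ y in Icc 0 a, f y ∂μ - f 0 * μ.real {0} := by
  have hneg : ∫ y in Icc (-a) 0, f y ∂μ = ∫ y in Icc 0 a, f y ∂μ := by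
    have := (Measure.measurePreserving_neg μ).setIntegral_preimage_emb measurableEmbedding_neg f
      (Icc (-a) 0)
    simp only [hf] at this
    rw [← this]
    congr 1
    ext y
    simp
  have hpos : ∫ y in Icc 0 a, f y ∂μ = f 0 * μ.real {0} + ∫ y in Ioc 0 a, f y ∂μ := by
    rw [← Icc_union_Ioc_eq_Icc le_rfl ha, setIntegral_union
      ((Iic_disjoint_Ioc le_rfl).mono_left Icc_subset_Iic_self) measurableSet_Ioc
      (hfi.mono_set (Icc_subset_Icc (by linarith) (by linarith))) (hfi.mono_set
      (Ioc_subset_Icc_self.trans (Icc_subset_Icc (by linarith) le_rfl))), Icc_self,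
      integral_singleton, smul_eq_mul, mul_comm]
  rw [← Icc_union_Ioc_eq_Icc (neg_nonpos.2 ha) ha, setIntegral_union
    ((Iic_disjoint_Ioc le_rfl).mono_left Icc_subset_Iic_self) measurableSet_Ioc
    (hfi.mono_set (Icc_subset_Icc le_rfl ha))
    (hfi.mono_set (Ioc_subset_Icc_self.trans (Icc_subset_Icc (neg_nonpos.2 ha) le_rfl))), hneg]
  linarith

theorem one_le_integral_inv {ν : Measure ℝ} [IsProbabilityMeasure ν] (hν : ∀ᵐ s ∂ν, s ∈ Ioc 0 1)
    (hinv : Integrable (fun s : ℝ => s⁻¹) ν) : 1 ≤ ∫ s, s⁻¹ ∂ν := by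
  simpa using integral_mono_ae (integrable_const 1) hinv
    (hν.mono fun s hs => (one_le_inv₀ hs.1).2 hs.2)

section gapMeasure

variable {υ : Measure ℝ}

theorem ae_mem_Ioc_map_one_sub_abs (hθfin : ∫⁻ x, (ENNReal.ofReal (1 - |x|))⁻¹ ∂υ < ⊤) :
    ∀ᵐ s ∂υ.map (fun y => 1 - |y|), s ∈ Ioc 0 1 := by
  refine (ae_map_iff (by fun_prop) measurableSet_Ioc).2 ?_
  filter_upwards [ae_lt_top (by fun_prop) hθfin.ne] with y hy
  exact ⟨by simpa [ENNReal.ofReal_pos] using hy, by linarith [abs_nonneg y]⟩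

theorem integrable_inv_map_one_sub_abs (hθfin : ∫⁻ x, (ENNReal.ofReal (1 - |x|))⁻¹ ∂υ < ⊤) :
    Integrable (fun s : ℝ => s⁻¹) (υ.map fun y => 1 - |y|) := by
  have hfin : ∫⁻ s, (ENNReal.ofReal s)⁻¹ ∂(υ.map fun y => 1 - |y|) ≠ ⊤ := by
    rw [lintegral_map (by fun_prop) (by fun_prop)]
    exact hθfin.ne
  refine (integrable_toReal_of_lintegral_ne_top (by fun_prop) hfin).congr ?_
  filter_upwards [ae_mem_Ioc_map_one_sub_abs hθfin] with s hs
  simp [ENNReal.toReal_inv, ENNReal.toReal_ofReal hs.1.le]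

theorem integral_secondMomentKernel_map_one_sub_abs [IsFiniteMeasure υ]
    (hθfin : ∫⁻ x, (ENNReal.ofReal (1 - |x|))⁻¹ ∂υ < ⊤) (N : ℕ) :
    ∫ s, secondMomentKernel N s ∂(υ.map fun y => 1 - |y|)
      = ∑ n ∈ Finset.Icc 1 N, (n : ℝ) ^ 2 * ∫ x, |x| ^ (n - 1) * (1 - |x|) ∂υ := by
  rw [integral_secondMomentKernel (ae_mem_Ioc_map_one_sub_abs hθfin)]
  refine Finset.sum_congr rfl fun n _ => ?_
  rw [integral_map (by fun_prop) (by fun_prop)]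
  simp

theorem invSqTail_map_one_sub_abs [IsFiniteMeasure υ] [υ.IsNegInvariant] {x : ℝ} (hx0 : 0 < x)
    (hx1 : x ≤ 1) :
    invSqTail (υ.map fun y => 1 - |y|) x
      = 2 * ∫ y in Icc 0 (1 - x), ((1 - y) ^ 2)⁻¹ ∂υ - υ.real {0} := by
  have hpre : (fun y : ℝ => 1 - |y|) ⁻¹' Ici x = Icc (-(1 - x)) (1 - x) := by
    ext y
    simp only [mem_preimage, mem_Ici, mem_Icc, ← abs_le]
    constructor <;> intro h <;> linarith
  have hint : IntegrableOn (fun y : ℝ => ((1 - |y|) ^ 2)⁻¹) (Icc (-(1 - x)) (1 - x)) υ := by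
    refine Integrable.of_bound (by fun_prop) (x ^ 2)⁻¹ ?_
    filter_upwards [ae_restrict_mem measurableSet_Icc] with y hy
    have : x ≤ 1 - |y| := by linarith [abs_le.2 hy]
    rw [Real.norm_of_nonneg (by positivity)]
    exact inv_anti₀ (by positivity) (pow_le_pow_left₀ hx0.le this 2)
  rw [invSqTail, setIntegral_map measurableSet_Ici (by fun_prop) (by fun_prop), hpre,
    setIntegral_Icc_neg_eq_of_even (fun y => by simp) (by linarith) hint]
  have hpos : ∫ y in Icc 0 (1 - x), ((1 - |y|) ^ 2)⁻¹ ∂υ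
      = ∫ y in Icc 0 (1 - x), ((1 - y) ^ 2)⁻¹ ∂υ :=
    setIntegral_congr_fun measurableSet_Icc fun y hy => by simp [abs_of_nonneg hy.1]
  simp [hpos]

end gapMeasure

theorem regeneration_time_truncated_second_moment_slowly_varying
    (υ : Measure ℝ) [IsProbabilityMeasure υ]
    (hsym : ∀ A : Set ℝ, MeasurableSet A → υ ((fun x => -x) ⁻¹' A) = υ A)
    (hθfin : ∫⁻ x, (ENNReal.ofReal (1 - |x|))⁻¹ ∂υ < ⊤)
    (θ : ℝ) (hθ : θ = ∫ x, (1 - |x|)⁻¹ ∂υ)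
    (p : ℕ → ℝ) (hp : ∀ n : ℕ, 1 ≤ n → p n = ∫ x, |x| ^ (n - 1) * (1 - |x|) ∂υ)
    (H : ℝ → ℝ) (hH : ∀ u : ℝ, H u = ∑ n ∈ Finset.Icc 1 ⌊u⌋₊, (n : ℝ) ^ 2 * p n)
    (V : ℝ → ℝ)
    (hV : ∀ x : ℝ, V x = (2 / θ) * ∫ y in Set.Icc (0:ℝ) (1 - x), ((1 - y) ^ 2)⁻¹ ∂υ)
    (hVslow : ∀ s > 0, Tendsto (fun x : ℝ => V (s * x) / V x) (𝓝[>] (0:ℝ)) (𝓝 1))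
    (hVinf : Tendsto V (𝓝[>] (0:ℝ)) atTop) :
    Tendsto (fun x : ℝ => H (1/x) / (2 * θ * V x)) (𝓝[>] (0:ℝ)) (𝓝 1) ∧
    ∀ s > 0, Tendsto (fun u : ℝ => H (s * u) / H u) atTop (𝓝 1) := by
  have : υ.IsNegInvariant :=
    ⟨Measure.ext fun A hA => by rw [Measure.neg, Measure.map_apply measurable_neg hA, hsym A hA]⟩
  set ν := υ.map fun y => 1 - |y|
  have : IsProbabilityMeasure ν := Measure.isProbabilityMeasure_map (by fun_prop)
  have hν := ae_mem_Ioc_map_one_sub_abs hθfin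
  have hθpos : 0 < θ := by
    rw [hθ, ← integral_map (by fun_prop) (by fun_prop)]
    exact one_pos.trans_le (one_le_integral_inv hν (integrable_inv_map_one_sub_abs hθfin))
  have hslow (c : ℝ) (hc : 0 < c) (s : ℝ) (hs : 0 < s) :
      Tendsto (fun x => c * V (s * x) / (c * V x)) (𝓝[>] 0) (𝓝 1) := by
    simpa [mul_div_mul_left _ _ hc.ne'] using hVslow s hs
  have hθV : Tendsto (fun x => θ * V x) (𝓝[>] 0) atTop := hVinf.const_mul_atTop hθpos
  have hJ : invSqTail ν ~[𝓝[>] 0] fun x => θ * V x := by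
    refine isEquivalent_of_eventuallyEq_sub_const (c := υ.real {0}) hθV ?_
    filter_upwards [Ioo_mem_nhdsGT one_pos] with x hx
    rw [invSqTail_map_one_sub_abs hx.1 hx.2.le, hV]
    field_simp
  have hHν (u : ℝ) : H u = ∫ s, secondMomentKernel ⌊u⌋₊ s ∂ν := by
    rw [hH, integral_secondMomentKernel_map_one_sub_abs hθfin]
    exact Finset.sum_congr rfl fun n hn => by rw [hp n (Finset.mem_Icc.1 hn).1]
  have hHV : (fun x => H (1 / x)) ~[𝓝[>] 0] fun x => 2 * θ * V x := by
    simp_rw [hHν]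
    simpa only [← mul_assoc] using isEquivalent_integral_secondMomentKernel hν
      (integrable_inv_map_one_sub_abs hθfin) hJ (hslow θ hθpos) hθV
  have h2θV : Tendsto (fun x => 2 * θ * V x) (𝓝[>] 0) atTop :=
    hVinf.const_mul_atTop (by positivity)
  exact ⟨(isEquivalent_iff_tendsto_one (h2θV.eventually_ne_atTop 0)).1 hHV,
    fun s hs => tendsto_mul_div_atTop_of_isEquivalent hHV (hslow (2 * θ) (by positivity))
      (h2θV.eventually_gt_atTop 0) hs⟩
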